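/- Let U be a compact convex subset of an n-dimensional real normed space, V a compact Hausdorff space, and J : U × V → ℝ a jointly continuous function such that for each fixed v ∈ V the map u ↦ J(u,v) is convex on U. Then an element u* ∈ U minimizes the function u ↦ max_{v∈V} J(u,v) over U if and only if there exist nonnegative real numbers λ₁,…,λ_{n+1} with λ₁+⋯+λ_{n+1} = 1 and points v₁*,…,v_{n+1}* ∈ V such that for all u ∈ U, all v₁,…,v_{n+1} ∈ V, and all nonnegative μ₁,…,μ_{n+1} with μ₁+⋯+μ_{n+1} = 1, one has Σ_{i=1}^{n+1} μᵢ J(u*, vᵢ) ≤ Σ_{i=1}^{n+1} λᵢ J(u*, vᵢ*) ≤ Σ_{i=1}^{n+1} λᵢ J(u, vᵢ*). -/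

import Mathlib

/-!
Let `c` be the minimax value `max_v J (u⋆, v)`. For `c' < c` the sublevel sets
`{u ∈ U | J (u, v) ≤ c'}`, `v ∈ V`, are compact and convex with empty intersection, so by Helly's
theorem `n + 1` of them already have empty intersection. Letting `c' → c` in the compact space
`V ^ (n + 1)` gives points `vᵢ⋆` with `maxᵢ J (u, vᵢ⋆) ≥ c` on `U`. Separating the convex set
`{y | ∃ u ∈ U, ∀ i, J (u, vᵢ⋆) ≤ yᵢ}` from the open orthant `{y | ∀ i, yᵢ < c}` produces weights
`λ` with `∑ λᵢ J (u, vᵢ⋆) ≥ c` on `U`, and both saddle inequalities follow because every convex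
combination of values `J (u⋆, v)` is at most `c`. Conversely, testing with `μ = δ₁` and `vᵢ = v`
bounds `J (u⋆, v)` by `max_v J (u, v)`.
-/

open Finset Module Set

lemma Finset.exists_fin_subset_range_of_card_le {α : Type*} [Nonempty α] {s : Finset α} {m : ℕ}
    (hs : #s ≤ m) : ∃ w : Fin m → α, ↑s ⊆ Set.range w := by
  classical
  refine ⟨fun j => s.toList.getD j (Classical.arbitrary α), fun x hx => ?_⟩
  obtain ⟨j, hj, rfl⟩ := List.mem_iff_getElem.mp (mem_toList.mpr hx)
  exact ⟨⟨j, hj.trans_le (by rwa [length_toList])⟩, List.getD_eq_getElem _ _ hj⟩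

lemma CompactSpace.exists_forall_le_of_forall_lt {X ι : Type*} [TopologicalSpace X]
    [CompactSpace X] {f : ι → X → ℝ} (hf : ∀ i, Continuous (f i)) {c : ℝ}
    (h : ∀ c' < c, ∃ x, ∀ i, c' < f i x) : ∃ x, ∀ i, c ≤ f i x := by
  let S : Iio c → Set X := fun c' => {x | ∀ i, c' ≤ f i x}
  have hS_anti : Antitone S := fun a b hab x hx i => (Subtype.mono_coe _ hab).trans (hx i)
  have hS_closed : ∀ c', IsClosed (S c') := fun c' => by
    simpa only [S, ofPred_forall] using isClosed_iInter fun i => isClosed_le continuous_const (hf i)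
  have : Nonempty (Iio c) := ⟨⟨c - 1, by simp⟩⟩
  obtain ⟨x, hx⟩ := IsCompact.nonempty_iInter_of_directed_nonempty_isCompact_isClosed S
    hS_anti.directed_ge (fun c' => (h c' c'.2).imp fun x hx i => (hx i).le)
    (fun c' => (hS_closed c').isCompact) hS_closed
  exact ⟨x, fun i => le_of_forall_lt_imp_le_of_dense fun c' hc' => mem_iInter.mp hx ⟨c', hc'⟩ i⟩

lemma sum_mul_le_of_mem_stdSimplex {ι : Type*} [Fintype ι] {μ a : ι → ℝ} {M : ℝ}
    (hμ : μ ∈ stdSimplex ℝ ι) (ha : ∀ i, a i ≤ M) : ∑ i, μ i * a i ≤ M :=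
  calc ∑ i, μ i * a i ≤ ∑ i, μ i * M :=
        sum_le_sum fun i _ => mul_le_mul_of_nonneg_left (ha i) (hμ.1 i)
    _ = M := by rw [← sum_mul, hμ.2, one_mul]

lemma nonneg_of_forall_le_add_mul {a b c : ℝ} (h : ∀ t, 0 ≤ t → c ≤ a + t * b) : 0 ≤ b := by
  by_contra! hb
  have h₀ := h 0 le_rfl
  have := h ((a - c + 1) / -b) (div_nonneg (by linarith) (by linarith))
  have hcancel : (a - c + 1) / -b * b = -(a - c + 1) := by
    rw [div_neg, neg_mul, div_mul_cancel₀ _ hb.ne]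
  linarith

lemma convex_setOf_exists_forall_le {E ι : Type*} [AddCommGroup E] [Module ℝ E] {U : Set E}
    (hUconv : Convex ℝ U) {g : ι → E → ℝ} (hg : ∀ i, ConvexOn ℝ U (g i)) :
    Convex ℝ {y : ι → ℝ | ∃ u ∈ U, ∀ i, g i u ≤ y i} := by
  rintro y₁ ⟨u₁, hu₁, h₁⟩ y₂ ⟨u₂, hu₂, h₂⟩ a b ha hb hab
  refine ⟨a • u₁ + b • u₂, hUconv hu₁ hu₂ ha hb hab, fun i => ?_⟩
  calc g i (a • u₁ + b • u₂) ≤ a * g i u₁ + b * g i u₂ := (hg i).2 hu₁ hu₂ ha hb hab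
    _ ≤ a * y₁ i + b * y₂ i := by gcongr <;> apply_assumption
    _ = (a • y₁ + b • y₂) i := by simp

lemma LinearMap.apply_eq_sum_apply_single_mul {ι : Type*} [Fintype ι] [DecidableEq ι]
    (f : (ι → ℝ) →ₗ[ℝ] ℝ) (y : ι → ℝ) : f y = ∑ i, f (Pi.single i 1) * y i := by
  rw [f.pi_apply_eq_sum_univ]
  refine sum_congr rfl fun i _ => ?_
  simp only [smul_eq_mul, mul_comm, ← Pi.single_apply, Pi.single_comm]

lemma exists_mem_stdSimplex_le_sum_mul {E ι : Type*} [AddCommGroup E] [Module ℝ E] [Fintype ι]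
    {U : Set E} (hU : U.Nonempty) (hUconv : Convex ℝ U) {g : ι → E → ℝ}
    (hg : ∀ i, ConvexOn ℝ U (g i)) {c : ℝ} (h : ∀ u ∈ U, ∃ i, c ≤ g i u) :
    ∃ lam ∈ stdSimplex ℝ ι, ∀ u ∈ U, c ≤ ∑ i, lam i * g i u := by
  classical
  let B : Set (ι → ℝ) := univ.pi fun _ => Iio c
  let K : Set (ι → ℝ) := {y | ∃ u ∈ U, ∀ i, g i u ≤ y i}
  have hBK : Disjoint B K := by
    rw [Set.disjoint_left]
    rintro y hyB ⟨u, hu, hy⟩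
    obtain ⟨i, hi⟩ := h u hu
    exact (hi.trans (hy i)).not_gt (hyB i (mem_univ i))
  obtain ⟨f, α, hfB, hfK⟩ := geometric_hahn_banach_open (convex_pi fun _ _ => convex_Iio c)
    (isOpen_set_pi finite_univ fun _ _ => isOpen_Iio) (convex_setOf_exists_forall_le hUconv hg) hBK
  set lam : ι → ℝ := fun i => f (Pi.single i 1)
  have hf : ∀ y, f y = ∑ i, lam i * y i := f.toLinearMap.apply_eq_sum_apply_single_mul
  obtain ⟨u₀, hu₀⟩ := hU
  have hlam : ∀ i, 0 ≤ lam i := fun i => nonneg_of_forall_le_add_mul fun t ht => by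
    have hmem : (fun j => g j u₀) + t • Pi.single i 1 ∈ K :=
      ⟨u₀, hu₀, fun j => le_add_of_nonneg_right <| by
        by_cases hj : j = i <;> simp [hj, ht]⟩
    simpa [lam] using hfK _ hmem
  have hc : f (fun _ => c) ≤ α := by
    have hcB : (fun _ => c) ∈ closure B := by
      rw [closure_pi_set, closure_Iio]
      exact fun _ _ => mem_Iic.2 le_rfl
    exact closure_minimal (fun y hy => (hfB y hy).le)
      (isClosed_le f.continuous continuous_const) hcB
  have hpos : 0 < ∑ i, lam i := by
    refine (sum_nonneg fun i _ => hlam i).lt_of_ne fun hzero => ?_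
    have hf0 : ∀ y, f y = 0 := fun y => by
      simp [hf, (sum_eq_zero_iff_of_nonneg fun i _ => hlam i).mp hzero.symm]
    have h₁ := hfB (fun _ => c - 1) fun _ _ => by simp
    have h₂ := hfK _ ⟨u₀, hu₀, fun _ => le_rfl⟩
    rw [hf0] at h₁ h₂
    linarith
  refine ⟨fun i => lam i / ∑ j, lam j, ⟨fun i => div_nonneg (hlam i) hpos.le, ?_⟩,
    fun u hu => ?_⟩
  · rw [← sum_div, div_self hpos.ne']
  · have hu := hfK _ ⟨u, hu, fun _ => le_rfl⟩
    rw [hf] at hu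
    rw [hf, ← sum_mul] at hc
    simp_rw [div_mul_eq_mul_div, ← sum_div, le_div_iff₀ hpos]
    linarith

lemma exists_fin_forall_exists_lt_of_forall_exists_lt {E V : Type*} [AddCommGroup E]
    [Module ℝ E] [TopologicalSpace E] [T2Space E] [FiniteDimensional ℝ E] [Nonempty V]
    {U : Set E} (hUc : IsCompact U) {J : E → V → ℝ} (hJcont : ∀ v, ContinuousOn (J · v) U)
    (hJconv : ∀ v, ConvexOn ℝ U (J · v)) {c : ℝ} (h : ∀ u ∈ U, ∃ v, c < J u v) :
    ∃ w : Fin (finrank ℝ E + 1) → V, ∀ u ∈ U, ∃ i, c < J u (w i) := by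
  let F : V → Set E := fun v => {u ∈ U | J u v ≤ c}
  have hF_compact : ∀ v, IsCompact (F v) := fun v =>
    hUc.of_isClosed_subset
      ((hJcont v).preimage_isClosed_of_isClosed hUc.isClosed isClosed_Iic) fun _ hu => hu.1
  have hF_empty : ¬ (⋂ v, F v).Nonempty := by
    rintro ⟨u, hu⟩
    obtain ⟨v, hv⟩ := h u (mem_iInter.mp hu (Classical.arbitrary V)).1
    exact hv.not_ge (mem_iInter.mp hu v).2
  obtain ⟨I, hI_card, hI_empty⟩ :
      ∃ I : Finset V, #I ≤ finrank ℝ E + 1 ∧ ¬ (⋂ v ∈ I, F v).Nonempty := by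
    by_contra! hI
    exact hF_empty (Convex.helly_theorem_compact' (fun v => (hJconv v).convex_le c) hF_compact hI)
  obtain ⟨w, hw⟩ := I.exists_fin_subset_range_of_card_le hI_card
  refine ⟨w, fun u hu => ?_⟩
  by_contra! hle
  refine hI_empty ⟨u, mem_iInter₂.mpr fun v hv => ?_⟩
  obtain ⟨i, rfl⟩ := hw hv
  exact ⟨hu, hle i⟩

lemma exists_mem_stdSimplex_le_sum_mul_of_le_iSup {E V : Type*} [AddCommGroup E] [Module ℝ E]
    [TopologicalSpace E] [T2Space E] [FiniteDimensional ℝ E] [TopologicalSpace V] [CompactSpace V]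
    [Nonempty V] {U : Set E} (hU : U.Nonempty) (hUc : IsCompact U) (hUconv : Convex ℝ U)
    {J : E → V → ℝ} (hJcont_left : ∀ v, ContinuousOn (J · v) U)
    (hJcont_right : ∀ u ∈ U, Continuous (J u)) (hJconv : ∀ v, ConvexOn ℝ U (J · v)) {c : ℝ}
    (hc : ∀ u ∈ U, c ≤ ⨆ v, J u v) :
    ∃ lam ∈ stdSimplex ℝ (Fin (finrank ℝ E + 1)), ∃ w : Fin (finrank ℝ E + 1) → V,
      ∀ u ∈ U, c ≤ ∑ i, lam i * J u (w i) := by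
  let M : U → (Fin (finrank ℝ E + 1) → V) → ℝ := fun u w => univ.sup' univ_nonempty (J u <| w ·)
  have hM : ∀ u, Continuous (M u) := fun u =>
    Continuous.finset_sup'_apply _ fun i _ => (hJcont_right u u.2).comp (continuous_apply i)
  have happrox : ∀ c' < c, ∃ w, ∀ u, c' < M u w := fun c' hc' => by
    obtain ⟨w, hw⟩ := exists_fin_forall_exists_lt_of_forall_exists_lt hUc hJcont_left hJconv
      fun u hu => exists_lt_of_lt_ciSup (hc'.trans_le (hc u hu))
    exact ⟨w, fun u => (lt_sup'_iff _).2 <| (hw u u.2).imp fun i hi => ⟨mem_univ i, hi⟩⟩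
  obtain ⟨w, hw⟩ := CompactSpace.exists_forall_le_of_forall_lt hM happrox
  obtain ⟨lam, hlam, hle⟩ := exists_mem_stdSimplex_le_sum_mul hU hUconv (fun i => hJconv (w i))
    fun u hu => ((le_sup'_iff _).1 (hw ⟨u, hu⟩)).imp fun _ hi => hi.2
  exact ⟨lam, hlam, w, hle⟩

theorem generalized_minimax
    {E : Type*} [NormedAddCommGroup E] [NormedSpace ℝ E]
    {n : ℕ} (hn : 0 < n) (hE : Module.finrank ℝ E = n)
    {V : Type*} [TopologicalSpace V] [CompactSpace V] [Nonempty V]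
    (U : Set E) (hUc : IsCompact U) (hUconv : Convex ℝ U)
    (J : E → V → ℝ)
    (hJcont : ContinuousOn (fun p : E × V => J p.1 p.2) (U ×ˢ Set.univ))
    (hJconv : ∀ v : V, ConvexOn ℝ U (fun u => J u v))
    (ustar : E) (hustar : ustar ∈ U) :
    (∀ u ∈ U, (⨆ v : V, J ustar v) ≤ ⨆ v : V, J u v) ↔
      ∃ (lam : Fin (n + 1) → ℝ) (vstar : Fin (n + 1) → V),
        (∀ i, 0 ≤ lam i) ∧ (∑ i, lam i) = 1 ∧
        ∀ u ∈ U, ∀ v : Fin (n + 1) → V, ∀ mu : Fin (n + 1) → ℝ,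
          (∀ i, 0 ≤ mu i) → (∑ i, mu i) = 1 →
            (∑ i, mu i * J ustar (v i)) ≤ (∑ i, lam i * J ustar (vstar i)) ∧
            (∑ i, lam i * J ustar (vstar i)) ≤ ∑ i, lam i * J u (vstar i) := by
  have : FiniteDimensional ℝ E := .of_finrank_pos (hE ▸ hn)
  subst hE
  have hJcont_left : ∀ v, ContinuousOn (J · v) U := fun v =>
    hJcont.comp (continuousOn_id.prodMk continuousOn_const) fun _ hu => ⟨hu, trivial⟩
  have hJcont_right : ∀ u ∈ U, Continuous (J u) := fun u hu => continuousOn_univ.1 <|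
    hJcont.comp (continuousOn_const.prodMk continuousOn_id) fun _ _ => ⟨hu, trivial⟩
  have hle_iSup : ∀ u ∈ U, ∀ v, J u v ≤ ⨆ v, J u v := fun u hu =>
    le_ciSup (isCompact_range (hJcont_right u hu)).bddAbove
  constructor
  · intro hmin
    obtain ⟨lam, hlam, w, hw⟩ := exists_mem_stdSimplex_le_sum_mul_of_le_iSup ⟨ustar, hustar⟩ hUc
      hUconv hJcont_left hJcont_right hJconv hmin
    have hsaddle : ∑ i, lam i * J ustar (w i) ≤ ⨆ v, J ustar v :=
      sum_mul_le_of_mem_stdSimplex hlam fun _ => hle_iSup ustar hustar _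
    refine ⟨lam, w, hlam.1, hlam.2, fun u hu v mu hmu hmu_sum => ⟨?_, hsaddle.trans (hw u hu)⟩⟩
    exact (sum_mul_le_of_mem_stdSimplex ⟨hmu, hmu_sum⟩ fun _ => hle_iSup ustar hustar _).trans
      (hw ustar hustar)
  · rintro ⟨lam, w, hlam, hlam_sum, hsaddle⟩ u hu
    refine ciSup_le fun v => ?_
    have hδ := single_mem_stdSimplex ℝ (0 : Fin (finrank ℝ E + 1))
    obtain ⟨h₁, h₂⟩ := hsaddle u hu (fun _ => v) _ hδ.1 hδ.2
    rw [← sum_mul, hδ.2, one_mul] at h₁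
    exact (h₁.trans h₂).trans
      (sum_mul_le_of_mem_stdSimplex ⟨hlam, hlam_sum⟩ fun _ => hle_iSup u hu _)
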